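/- (Tensor key lemma) For every base B, all finite multisets of atoms S and T, and all IMLL formulas φ, ψ, χ: if (1) ⊩_B^S φ ⊗ ψ and (2) φ ⨾ ψ ⊩_B^T χ, then (3) ⊩_B^{S ⨾ T} χ. -/
import Mathlib


/-- Formulas of intuitionistic multiplicative linear logic over a
countably infinite set of atoms (here: `ℕ`). -/
inductive MForm : Type where
  | atom : ℕ → MForm
  | tensor : MForm → MForm → MForm
  | unit : MForm
  | limp : MForm → MForm → MForm
deriving DecidableEq

/-- An atomic rule `(P₁ ▷ p₁, …, Pₙ ▷ pₙ) ⇒ p`: a (possibly empty) finite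
set of atomic sequents together with a conclusion atom. -/
structure MRule : Type where
  prems : Finset (Multiset ℕ × ℕ)
  concl : ℕ

/-- A base is a set of atomic rules. -/
abbrev MBase := Set MRule

/-- Derivability in a base `B`: `P ⊢_B p`. -/
inductive MDer (B : MBase) : Multiset ℕ → ℕ → Prop where
  | ref (p : ℕ) : MDer B {p} p
  | app {r : MRule} (hr : r ∈ B) (S : Multiset ℕ × ℕ → Multiset ℕ)
      (h : ∀ pr ∈ r.prems, MDer B (S pr + pr.1) pr.2) :
      MDer B (r.prems.sum S) r.concl

/-- The resource-indexed support relation `⊩_B^P φ`. -/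
def MSupp : MForm → MBase → Multiset ℕ → Prop
  | .atom p, B, P => MDer B P p
  | .tensor φ ψ, B, P => ∀ X : MBase, B ⊆ X → ∀ U : Multiset ℕ, ∀ p : ℕ,
      (∀ Y : MBase, X ⊆ Y → ∀ V : Multiset ℕ,
        (∃ V₁ V₂ : Multiset ℕ, V = V₁ + V₂ ∧ MSupp φ Y V₁ ∧ MSupp ψ Y V₂) →
        MDer Y (U + V) p) →
      MDer X (P + U) p
  | .unit, B, P => ∀ X : MBase, B ⊆ X → ∀ U : Multiset ℕ, ∀ p : ℕ,
      MDer X U p → MDer X (P + U) p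
  | .limp φ ψ, B, P => ∀ X : MBase, B ⊆ X → ∀ U : Multiset ℕ,
      MSupp φ X U → MSupp ψ X (P + U)

/-- Support of a multiset of formulas: `⊩_B^P Γ`, obtained by splitting
the resources `P` among the members of `Γ`. -/
inductive MSuppCtx (B : MBase) : Multiset ℕ → Multiset MForm → Prop where
  | nil : MSuppCtx B 0 0
  | cons {P Q : Multiset ℕ} {φ : MForm} {Γ : Multiset MForm} :
      MSupp φ B P → MSuppCtx B Q Γ → MSuppCtx B (P + Q) (φ ::ₘ Γ)

/-- Support of a sequent: `Γ ⊩_B^P φ` (clause (Inf)). -/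
def MSuppInf (Γ : Multiset MForm) (B : MBase) (P : Multiset ℕ) (φ : MForm) : Prop :=
  ∀ X : MBase, B ⊆ X → ∀ U : Multiset ℕ, MSuppCtx X U Γ → MSupp φ X (P + U)

/-- Validity: `Γ ⊩ φ` iff `Γ ⊩_B^∅ φ` for every base `B`. -/
def MValid (Γ : Multiset MForm) (φ : MForm) : Prop :=
  ∀ B : MBase, MSuppInf Γ B 0 φ

/-- The natural deduction system NIMLL: `Γ ⊢ φ`. -/
inductive NIMLL : Multiset MForm → MForm → Prop where
  | ax (φ : MForm) : NIMLL {φ} φ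
  | limpI {Γ : Multiset MForm} {φ ψ : MForm} :
      NIMLL (φ ::ₘ Γ) ψ → NIMLL Γ (.limp φ ψ)
  | limpE {Γ Δ : Multiset MForm} {φ ψ : MForm} :
      NIMLL Γ (.limp φ ψ) → NIMLL Δ φ → NIMLL (Γ + Δ) ψ
  | unitI : NIMLL 0 .unit
  | unitE {Γ Δ : Multiset MForm} {φ : MForm} :
      NIMLL Γ φ → NIMLL Δ .unit → NIMLL (Γ + Δ) φ
  | tensorI {Γ Δ : Multiset MForm} {φ ψ : MForm} :
      NIMLL Γ φ → NIMLL Δ ψ → NIMLL (Γ + Δ) (.tensor φ ψ)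
  | tensorE {Γ Δ : Multiset MForm} {φ ψ χ : MForm} :
      NIMLL Γ (.tensor φ ψ) → NIMLL (φ ::ₘ ψ ::ₘ Δ) χ → NIMLL (Γ + Δ) χ


theorem mder_mono {B C : MBase} (hBC : B ⊆ C) {P : Multiset ℕ} {p : ℕ}
    (h : MDer B P p) : MDer C P p := by
  induction h with
  | ref p => exact .ref p
  | app hr S h ih => exact .app (hBC hr) S (fun pr hpr => ih pr hpr)

theorem msupp_mono {B C : MBase} (hBC : B ⊆ C) {φ : MForm} {P : Multiset ℕ}
    (h : MSupp φ B P) : MSupp φ C P := by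
  cases φ with
  | atom p => exact mder_mono hBC h
  | tensor φ ψ => exact fun X hCX => h X (hBC.trans hCX)
  | unit => exact fun X hCX => h X (hBC.trans hCX)
  | limp φ ψ => exact fun X hCX => h X (hBC.trans hCX)

theorem msuppctx_pair {Y : MBase} {φ ψ : MForm} {V V1 V2 : Multiset ℕ}
    (hV : V = V1 + V2) (hφ : MSupp φ Y V1) (hψ : MSupp ψ Y V2) :
    MSuppCtx Y V ({φ, ψ} : Multiset MForm) := by
  subst hV
  have h0 : MSuppCtx Y (V2 + 0) (ψ ::ₘ 0) := MSuppCtx.cons hψ MSuppCtx.nil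
  rw [add_zero] at h0
  exact MSuppCtx.cons hφ h0

/-- (Tensor key lemma) If `⊩_B^S φ ⊗ ψ` and `φ ⨾ ψ ⊩_B^T χ`, then
`⊩_B^{S ⨾ T} χ`. -/
theorem imll_tensor_key (B : MBase) (S T : Multiset ℕ) (φ ψ χ : MForm)
    (h1 : MSupp (.tensor φ ψ) B S)
    (h2 : MSuppInf {φ, ψ} B T χ) :
    MSupp χ B (S + T) := by
  induction χ generalizing B S T with
  | atom q =>
    refine h1 B (fun _ h => h) T q ?_
    rintro Y hBY V ⟨V1, V2, hV, hφ, hψ⟩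
    exact h2 Y hBY V (msuppctx_pair hV hφ hψ)
  | tensor χ1 χ2 ih1 ih2 =>
    intro X hBX U p hU
    have key : MDer X (S + (T + U)) p := by
      refine h1 X hBX (T + U) p ?_
      rintro Y hXY V ⟨V1, V2, hV, hφ, hψ⟩
      have hts : MSupp (.tensor χ1 χ2) Y (T + V) :=
        h2 Y (hBX.trans hXY) V (msuppctx_pair hV hφ hψ)
      have hd : MDer Y ((T + V) + U) p :=
        hts Y (fun _ h => h) U p (fun Z hYZ W hW => hU Z (hXY.trans hYZ) W hW)
      rwa [add_right_comm] at hd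
    rwa [← add_assoc] at key
  | unit =>
    intro X hBX U p hU
    have key : MDer X (S + (T + U)) p := by
      refine h1 X hBX (T + U) p ?_
      rintro Y hXY V ⟨V1, V2, hV, hφ, hψ⟩
      have hts : MSupp .unit Y (T + V) :=
        h2 Y (hBX.trans hXY) V (msuppctx_pair hV hφ hψ)
      have hd : MDer Y ((T + V) + U) p :=
        hts Y (fun _ h => h) U p (mder_mono hXY hU)
      rwa [add_right_comm] at hd
    rwa [← add_assoc] at key
  | limp χ1 χ2 ih1 ih2 =>
    intro X hBX U hχ1
    have h1' : MSupp (.tensor φ ψ) X S := msupp_mono hBX h1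
    have h2' : MSuppInf {φ, ψ} X (T + U) χ2 := by
      intro Y hXY V hc
      have h := h2 Y (hBX.trans hXY) V hc Y (fun _ h => h) U (msupp_mono hXY hχ1)
      rwa [add_right_comm] at h
    have key := ih2 X S (T + U) h1' h2'
    rwa [← add_assoc] at key
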